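/- Let A ⊆ X with X ∖ N_k(A) ≠ ∅ for all k ∈ ℕ. Then the closed submodule M = closure of ⋃_k C*_u(N_k(A)) inside the Hilbert C*-module C*_u(X) (over itself) has trivial orthogonal complement (only S = 0 satisfies ⟨T,S⟩ = T*S = 0 for all T ∈ M) yet M ≠ C*_u(X); hence M is not orthogonally complemented in C*_u(X). -/

import Mathlib

noncomputable section

/-- `ℓ²(X)`. -/
abbrev H (X : Type) := lp (fun _ : X => ℂ) 2

/-- The delta function `δ_x`. -/
def delta {X : Type} (x : X) : H X :=
  letI := Classical.decEq X
  lp.single 2 x 1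

/-- Matrix entry `⟨δ_y, T δ_x⟩` of an operator. -/
def entry {X Y : Type} (T : H X →L[ℂ] H Y) (y : Y) (x : X) : ℂ := (T (delta x)) y

/-- `d` is a metric on `Z`. -/
structure IsMetric {Z : Type} (d : Z → Z → ℝ) : Prop where
  self : ∀ p, d p p = 0
  eq_of : ∀ p q, d p q = 0 → p = q
  symm : ∀ p q, d p q = d q p
  triangle : ∀ p q r, d p r ≤ d p q + d q r

/-- The cross part of the metric `d^A`:
`d^A(x₀, y₁) = inf_{z ∈ A} (d_X(x,z) + d_X(z,y) + 1)`. -/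
def crossA {X : Type} [MetricSpace X] (A : Set X) (x y : X) : ℝ :=
  ⨅ z : A, (dist x (z : X) + dist (z : X) y + 1)

/-- The metric `d^A` on the disjoint union `X₀ ⊔ X₁` of two copies of `X`. -/
def dA {X : Type} [MetricSpace X] (A : Set X) : X ⊕ X → X ⊕ X → ℝ
  | .inl x, .inl y => dist x y
  | .inr x, .inr y => dist x y
  | .inl x, .inr y => crossA A x y
  | .inr x, .inl y => crossA A y x

/-- The `k`-neighborhood `N_k(A) = {x : d_X(x, A) ≤ k}`. -/
def nbhd {X : Type} [MetricSpace X] (A : Set X) (k : ℝ) : Set X :=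
  {x : X | Metric.infDist x A ≤ k}


/-!
The rank-one projections `P_x` onto `ℂ δ_x` all lie in `M`, and `P_x S = 0` for all `x` says
that every coordinate of every `S v` vanishes, so `M` has trivial orthogonal complement. On the
other hand an operator supported in `N_k(A)` has a vanishing diagonal entry at a point outside
`N_k(A)`, which keeps it at distance at least `1` from the identity; so `1 ∈ C*_u(X)` is not in `M`.
-/

open InnerProductSpace ContinuousLinearMap
open scoped Classical

variable {X : Type}

lemma delta_apply (x y : X) : (delta x : H X) y = if y = x then 1 else 0 := by
  rw [delta, lp.single_apply, Pi.single_apply]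

lemma inner_delta_left (x : X) (f : H X) : ⟪delta x, f⟫_ℂ = f x := by
  rw [delta, lp.inner_single_left]
  simp

lemma norm_delta (x : X) : ‖(delta x : H X)‖ = 1 := by
  rw [delta, lp.norm_single (by norm_num), norm_one]

lemma norm_entry_le (T : H X →L[ℂ] H X) (y x : X) : ‖entry T y x‖ ≤ ‖T‖ :=
  calc ‖entry T y x‖ ≤ ‖T (delta x)‖ := lp.norm_apply_le_norm (by norm_num) _ _
    _ ≤ ‖T‖ * ‖(delta x : H X)‖ := T.le_opNorm _
    _ = ‖T‖ := by rw [norm_delta, mul_one]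

abbrev diagProj (x : X) : H X →L[ℂ] H X := rankOne ℂ (delta x) (delta x)

lemma diagProj_apply (x : X) (v : H X) : diagProj x v = v x • delta x := by
  rw [rankOne_apply, inner_delta_left]

lemma entry_diagProj (x y z : X) :
    entry (diagProj x) y z = if y = x ∧ z = x then 1 else 0 := by
  rw [entry, diagProj_apply, lp.coeFn_smul, Pi.smul_apply, delta_apply, delta_apply]
  split_ifs <;> simp_all

lemma entry_one (y x : X) : entry (1 : H X →L[ℂ] H X) y x = if y = x then 1 else 0 :=
  delta_apply x y

lemma eq_zero_of_forall_diagProj_comp_eq_zero {S : H X →L[ℂ] H X}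
    (hS : ∀ x, diagProj x ∘L S = 0) : S = 0 := by
  ext v x
  have hx : (S v) x • (delta x : H X) = 0 := by
    rw [← diagProj_apply, ← comp_apply, hS x, zero_apply]
  have hδ : (delta x : H X) ≠ 0 := norm_ne_zero_iff.mp (by rw [norm_delta]; exact one_ne_zero)
  simpa [hδ] using hx

/-- `T = P_s T P_s`. -/
def IsSupportedIn (T : H X →L[ℂ] H X) (s : Set X) : Prop :=
  ∀ x y : X, entry T x y ≠ 0 → x ∈ s ∧ y ∈ s

lemma isSupportedIn_diagProj {x : X} {s : Set X} (hx : x ∈ s) : IsSupportedIn (diagProj x) s :=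
  fun y z hyz => by
    by_cases h : y = x ∧ z = x
    · obtain ⟨rfl, rfl⟩ := h
      exact ⟨hx, hx⟩
    · rw [entry_diagProj, if_neg h] at hyz
      exact absurd rfl hyz

lemma one_notMem_closure_iUnion_isSupportedIn {ι : Type*} {s : ι → Set X}
    (hs : ∀ i, ∃ x, x ∉ s i) :
    (1 : H X →L[ℂ] H X) ∉ closure (⋃ i, {T | IsSupportedIn T (s i)}) := by
  rw [Metric.mem_closure_iff]
  push Not
  refine ⟨1, one_pos, fun T hT => ?_⟩
  obtain ⟨i, hTi⟩ := Set.mem_iUnion.mp hT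
  obtain ⟨x, hx⟩ := hs i
  have hTx : entry T x x = 0 := by_contra fun h => hx (hTi x x h).1
  have hentry : entry (1 - T) x x = 1 := by
    simp only [entry, sub_apply, lp.coeFn_sub, Pi.sub_apply]
    rw [← entry, ← entry, hTx, entry_one, if_pos rfl, sub_zero]
  calc (1 : ℝ) = ‖entry (1 - T) x x‖ := by rw [hentry, norm_one]
    _ ≤ dist 1 T := dist_eq_norm (1 : H X →L[ℂ] H X) T ▸ norm_entry_le _ x x

variable [MetricSpace X]

/-- The generators of the uniform Roe algebra `C*_u(X)`. -/
def HasFinitePropagation (T : H X →L[ℂ] H X) : Prop :=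
  ∃ L : ℝ, ∀ x y : X, L ≤ dist x y → entry T x y = 0

lemma hasFinitePropagation_of_entry_eq_zero_of_ne {T : H X →L[ℂ] H X}
    (hT : ∀ x y : X, x ≠ y → entry T x y = 0) : HasFinitePropagation T :=
  ⟨1, fun x y hxy => hT x y fun h => by subst h; norm_num at hxy⟩

lemma hasFinitePropagation_diagProj (x : X) : HasFinitePropagation (diagProj x) :=
  hasFinitePropagation_of_entry_eq_zero_of_ne fun y z hyz => by
    rw [entry_diagProj, if_neg]
    rintro ⟨rfl, rfl⟩
    exact hyz rfl

lemma hasFinitePropagation_one : HasFinitePropagation (1 : H X →L[ℂ] H X) :=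
  hasFinitePropagation_of_entry_eq_zero_of_ne fun y x hyx => by rw [entry_one, if_neg hyx]

lemma mem_nbhd_ceil_infDist (A : Set X) (x : X) : x ∈ nbhd A ⌈Metric.infDist x A⌉₊ :=
  Nat.le_ceil (Metric.infDist x A)

open ContinuousLinearMap in
theorem stmt_17_general {X : Type} [MetricSpace X] (A : Set X)
    (hk : ∀ k : ℕ, ∃ x : X, x ∉ nbhd A k)
    (M Roe : Set (H X →L[ℂ] H X))
    (hM : M = closure (⋃ k : ℕ, {T : H X →L[ℂ] H X |
        (∃ L : ℝ, ∀ x y : X, L ≤ dist x y → entry T x y = 0) ∧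
        (∀ x y : X, entry T x y ≠ 0 → x ∈ nbhd A k ∧ y ∈ nbhd A k)}))
    (hRoe : Roe = closure {T : H X →L[ℂ] H X |
        ∃ L : ℝ, ∀ x y : X, L ≤ dist x y → entry T x y = 0}) :
    (∀ S ∈ Roe, (∀ T ∈ M, (adjoint T).comp S = 0) → S = 0) ∧ M ≠ Roe := by
  have diagProj_mem : ∀ x, diagProj x ∈ M := fun x => hM ▸ subset_closure
    (Set.mem_iUnion.mpr ⟨_, hasFinitePropagation_diagProj x,
      isSupportedIn_diagProj (mem_nbhd_ceil_infDist A x)⟩)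
  refine ⟨fun S _ hS => eq_zero_of_forall_diagProj_comp_eq_zero fun x => ?_, fun hMRoe => ?_⟩
  · simpa using hS _ (diagProj_mem x)
  · have one_mem : (1 : H X →L[ℂ] H X) ∈ M :=
      hMRoe ▸ hRoe ▸ subset_closure hasFinitePropagation_one
    refine one_notMem_closure_iUnion_isSupportedIn hk (closure_mono ?_ (hM ▸ one_mem))
    exact Set.iUnion_mono fun k T hT => hT.2

open ContinuousLinearMap in
/-- if `X ∖ N_k(A) ≠ ∅` for all `k`, then the closed submodule
`M = closure ⋃ₖ C*_u(N_k(A))` of the Hilbert C*-module `C*_u(X)` (over itself, with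
`⟨T,S⟩ = T*S`) has trivial orthogonal complement yet `M ≠ C*_u(X)`; hence `M` is not
orthogonally complemented in `C*_u(X)`. -/
theorem stmt_17 {X : Type} [MetricSpace X] (A : Set X) (hA : A.Nonempty)
    (hk : ∀ k : ℕ, ∃ x : X, x ∉ nbhd A k)
    (M Roe : Set (H X →L[ℂ] H X))
    (hM : M = closure (⋃ k : ℕ, {T : H X →L[ℂ] H X |
        (∃ L : ℝ, ∀ x y : X, L ≤ dist x y → entry T x y = 0) ∧
        (∀ x y : X, entry T x y ≠ 0 → x ∈ nbhd A k ∧ y ∈ nbhd A k)}))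
    (hRoe : Roe = closure {T : H X →L[ℂ] H X |
        ∃ L : ℝ, ∀ x y : X, L ≤ dist x y → entry T x y = 0}) :
    (∀ S ∈ Roe, (∀ T ∈ M, (adjoint T).comp S = 0) → S = 0) ∧ M ≠ Roe :=
  stmt_17_general A hk M Roe hM hRoe
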